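/- Let F be a distribution belonging to the class OS, i.e., \bar{F}(x) > 0 for all x and limsup_{x→∞} \overline{F^{*2}}(x)/\bar{F}(x) < ∞. Then F is long-tailed if and only if F^{*2} = F * F is long-tailed. -/

import Mathlib

open MeasureTheory Filter Set Asymptotics

/-- Tail function of a distribution: `F̄(x) = μ(x, ∞)`. -/
noncomputable def tail (μ : Measure ℝ) (x : ℝ) : ℝ := (μ (Set.Ioi x)).toReal

/-- `F(a, b] = F(b) - F(a)`. -/
noncomputable def intv (μ : Measure ℝ) (a b : ℝ) : ℝ := (μ (Set.Ioc a b)).toReal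

/-- A distribution is long-tailed if `F̄(x+1)/F̄(x) → 1` as `x → ∞`. -/
def LongTailed (μ : Measure ℝ) : Prop :=
  Tendsto (fun x => tail μ (x + 1) / tail μ x) atTop (nhds 1)

/-- Convolution of two distributions on ℝ (law of the sum of independent rvs). -/
noncomputable def mconv (μ ν : Measure ℝ) : Measure ℝ :=
  Measure.map (fun p : ℝ × ℝ => p.1 + p.2) (μ.prod ν)

/-- `n`-fold convolution of a distribution with itself; `nconv μ 0` is the unit mass at 0. -/
noncomputable def nconv (μ : Measure ℝ) : ℕ → Measure ℝ
  | 0 => Measure.dirac 0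
  | n + 1 => mconv (nconv μ n) μ

/-- The class OS of generalised subexponential distributions: everywhere positive tail
and limsup of tail(F*F)/tail(F) finite (i.e. an eventual linear bound). -/
def OSClass (μ : Measure ℝ) : Prop :=
  (∀ x, 0 < tail μ x) ∧ ∃ M : ℝ, ∀ᶠ x in atTop, tail (mconv μ μ) x ≤ M * tail μ x

/-!
Write `Δ_F(x) = F(x, x + 1]`. A distribution with everywhere positive tail is long-tailed
iff `Δ_F(x) = o(F̄(x))`.

If `Δ_F ≤ δ F̄` and `Δ_G ≤ δ Ḡ` beyond `T`, then for `x ≥ 2T + 1` the event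
`x < X + Y ≤ x + 1` lies in `{X ≤ x - T} ∪ {Y ≤ T + 1}`. Conditioning on the variable that is
bounded, each part has probability at most `δ P(X + Y > x)`, so `Δ_{F*G} ≤ 2δ tail(F*G)`
beyond `2T + 1`.

Conversely, pick `a ≥ 0` with `p = F(a, a + 1/2] > 0`. Splitting `(x, x + 1]` into two halves
and adding `(a, a + 1/2]` to each gives `p Δ_F(x) ≤ Δ_{F*F}(a + x) + Δ_{F*F}(a + 1/2 + x)`,
which is `o(tail(F*F)(x)) = o(F̄(x))` by the OS bound.
-/

open scoped ENNReal Topology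

instance isFiniteMeasure_mconv (μ ν : Measure ℝ) [IsFiniteMeasure μ] [IsFiniteMeasure ν] :
    IsFiniteMeasure (mconv μ ν) := by
  unfold mconv
  infer_instance

lemma tail_nonneg (μ : Measure ℝ) (x : ℝ) : 0 ≤ tail μ x := ENNReal.toReal_nonneg

lemma intv_nonneg (μ : Measure ℝ) (a b : ℝ) : 0 ≤ intv μ a b := ENNReal.toReal_nonneg

section Tail

variable {μ : Measure ℝ} [IsFiniteMeasure μ]

lemma tail_antitone : Antitone (tail μ) := fun _ _ h =>
  ENNReal.toReal_mono (measure_ne_top _ _) (measure_mono (Ioi_subset_Ioi h))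

lemma tail_eq_intv_add_tail {a b : ℝ} (hab : a ≤ b) : tail μ a = intv μ a b + tail μ b := by
  rw [tail, tail, intv, ← Ioc_union_Ioi_eq_Ioi hab,
    measure_union Ioc_disjoint_Ioi_same measurableSet_Ioi,
    ENNReal.toReal_add (measure_ne_top _ _) (measure_ne_top _ _)]

lemma intv_eq_intv_add_intv {a b c : ℝ} (hab : a ≤ b) (hbc : b ≤ c) :
    intv μ a c = intv μ a b + intv μ b c := by
  rw [intv, intv, intv, ← Ioc_union_Ioc_eq_Ioc hab hbc,
    measure_union (Ioc_disjoint_Ioc_of_le le_rfl) measurableSet_Ioc,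
    ENNReal.toReal_add (measure_ne_top _ _) (measure_ne_top _ _)]

lemma intv_le_mul_tail_iff {ε : ℝ} (hε : 0 ≤ ε) (a b t : ℝ) :
    intv μ a b ≤ ε * tail μ t ↔ μ (Ioc a b) ≤ ENNReal.ofReal ε * μ (Ioi t) := by
  rw [intv, tail, ← ENNReal.toReal_ofReal hε, ← ENNReal.toReal_mul,
    ENNReal.toReal_le_toReal (measure_ne_top _ _)
      (ENNReal.mul_ne_top ENNReal.ofReal_ne_top (measure_ne_top _ _)), ENNReal.ofReal_toReal]
  exact ENNReal.ofReal_ne_top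

lemma tail_pos_of_eventually_pos (h : ∀ᶠ x in atTop, 0 < tail μ x) (x : ℝ) :
    0 < tail μ x := by
  obtain ⟨y, hy, hxy⟩ := (h.and (eventually_ge_atTop x)).exists
  exact hy.trans_le (tail_antitone hxy)

lemma LongTailed.tail_pos (h : LongTailed μ) (x : ℝ) : 0 < tail μ x := by
  refine tail_pos_of_eventually_pos ((h.eventually (lt_mem_nhds one_pos)).mono fun y hy => ?_) x
  refine (tail_nonneg μ y).lt_of_ne fun h0 => ?_
  rw [← h0, div_zero] at hy
  exact lt_irrefl 0 hy

theorem longTailed_iff_eventually_intv_le (hpos : ∀ x, 0 < tail μ x) :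
    LongTailed μ ↔ ∀ ε > 0, ∀ᶠ x in atTop, intv μ x (x + 1) ≤ ε * tail μ x := by
  have hratio (x : ℝ) : tail μ (x + 1) / tail μ x = 1 - intv μ x (x + 1) / tail μ x := by
    rw [eq_sub_iff_add_eq, ← add_div, add_comm,
      ← tail_eq_intv_add_tail (le_add_of_nonneg_right zero_le_one), div_self (hpos x).ne']
  have hnonneg (x : ℝ) : 0 ≤ intv μ x (x + 1) / tail μ x :=
    div_nonneg (intv_nonneg _ _ _) (tail_nonneg _ _)
  unfold LongTailed
  simp_rw [hratio]
  constructor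
  · intro h ε hε
    have h0 : Tendsto (fun x => intv μ x (x + 1) / tail μ x) atTop (𝓝 0) := by
      simpa using h.const_sub 1
    exact (h0.eventually (gt_mem_nhds hε)).mono fun x hx => ((div_lt_iff₀ (hpos x)).1 hx).le
  · intro h
    have h0 : Tendsto (fun x => intv μ x (x + 1) / tail μ x) atTop (𝓝 0) :=
      tendsto_order.2 ⟨fun a ha => Eventually.of_forall fun x => ha.trans_le (hnonneg x),
        fun a ha => (h (a / 2) (half_pos ha)).mono fun x hx => (div_lt_iff₀ (hpos x)).2
          (hx.trans_lt (mul_lt_mul_of_pos_right (half_lt_self ha) (hpos x)))⟩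
    simpa using h0.const_sub 1

end Tail

section Convolution

variable {μ ν : Measure ℝ}

lemma mconv_apply [SFinite μ] [SFinite ν] {s : Set ℝ} (hs : MeasurableSet s) :
    mconv μ ν s = μ.prod ν {p | p.1 + p.2 ∈ s} :=
  Measure.map_apply measurable_add hs

lemma measurableSet_add_mem {s : Set ℝ} (hs : MeasurableSet s) :
    MeasurableSet {p : ℝ × ℝ | p.1 + p.2 ∈ s} :=
  measurable_add hs

lemma measure_mul_measure_le_mconv [SFinite μ] [SFinite ν] {s t u : Set ℝ}
    (hu : MeasurableSet u) (h : ∀ a ∈ s, ∀ b ∈ t, a + b ∈ u) :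
    μ s * ν t ≤ mconv μ ν u := by
  rw [mconv_apply hu, ← Measure.prod_prod]
  exact measure_mono fun p hp => h _ hp.1 _ hp.2

lemma tail_mul_tail_le_tail_mconv [IsFiniteMeasure μ] [IsFiniteMeasure ν] (a b : ℝ) :
    tail μ a * tail ν b ≤ tail (mconv μ ν) (a + b) := by
  rw [tail, tail, tail, ← ENNReal.toReal_mul]
  exact ENNReal.toReal_mono (measure_ne_top _ _)
    (measure_mul_measure_le_mconv measurableSet_Ioi fun _ hu _ hv =>
      mem_Ioi.2 (add_lt_add hu hv))

lemma intv_mul_intv_le_intv_mconv [IsFiniteMeasure μ] [IsFiniteMeasure ν] (a b c d : ℝ) :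
    intv μ a b * intv ν c d ≤ intv (mconv μ ν) (a + c) (b + d) := by
  rw [intv, intv, intv, ← ENNReal.toReal_mul]
  exact ENNReal.toReal_mono (measure_ne_top _ _)
    (measure_mul_measure_le_mconv measurableSet_Ioc fun _ hu _ hv =>
      ⟨add_lt_add hu.1 hv.1, add_le_add hu.2 hv.2⟩)

lemma intv_half_mul_intv_le_intv_mconv_add [IsFiniteMeasure μ] [IsFiniteMeasure ν] (a x : ℝ) :
    intv μ a (a + 1 / 2) * intv ν x (x + 1) ≤
      intv (mconv μ ν) (a + x) (a + x + 1) +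
        intv (mconv μ ν) (a + 1 / 2 + x) (a + 1 / 2 + x + 1) := by
  rw [intv_eq_intv_add_intv (μ := ν) (a := x) (b := x + 1 / 2) (by linarith) (by linarith),
    mul_add]
  exact add_le_add
    ((intv_mul_intv_le_intv_mconv a (a + 1 / 2) x (x + 1 / 2)).trans_eq (by ring_nf))
    ((intv_mul_intv_le_intv_mconv a (a + 1 / 2) (x + 1 / 2) (x + 1)).trans_eq (by ring_nf))

variable [SFinite μ] [SFinite ν] {δ : ℝ≥0∞} {T c x : ℝ}

lemma prod_add_mem_Ioc_fst_le (hν : ∀ t ≥ T, ν (Ioc t (t + 1)) ≤ δ * ν (Ioi t))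
    (hc : c + T ≤ x) :
    μ.prod ν {p | p.1 + p.2 ∈ Ioc x (x + 1) ∧ p.1 ≤ c} ≤ δ * mconv μ ν (Ioi x) := by
  have hS : MeasurableSet {p : ℝ × ℝ | p.1 + p.2 ∈ Ioc x (x + 1) ∧ p.1 ≤ c} :=
    (measurableSet_add_mem measurableSet_Ioc).inter (measurable_fst measurableSet_Iic)
  have hR := measurableSet_add_mem (s := Ioi x) measurableSet_Ioi
  rw [mconv_apply measurableSet_Ioi, Measure.prod_apply hS, Measure.prod_apply hR,
    ← lintegral_const_mul _ (measurable_measure_prodMk_left hR)]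
  refine lintegral_mono fun u => ?_
  by_cases hu : u ≤ c
  · calc ν (Prod.mk u ⁻¹' _) ≤ ν (Ioc (x - u) (x - u + 1)) :=
          measure_mono fun v hv => ⟨by linarith [hv.1.1], by linarith [hv.1.2]⟩
      _ ≤ δ * ν (Ioi (x - u)) := hν _ (by linarith)
      _ ≤ δ * ν (Prod.mk u ⁻¹' _) := by
          gcongr
          exact fun v hv => show x < u + v by linarith [mem_Ioi.1 hv]
  · rw [measure_mono_null (fun v hv => hu hv.2) measure_empty]
    exact zero_le

lemma prod_add_mem_Ioc_snd_le (hμ : ∀ t ≥ T, μ (Ioc t (t + 1)) ≤ δ * μ (Ioi t))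
    (hc : c + T ≤ x) :
    μ.prod ν {p | p.1 + p.2 ∈ Ioc x (x + 1) ∧ p.2 ≤ c} ≤ δ * mconv μ ν (Ioi x) := by
  have hS : MeasurableSet {p : ℝ × ℝ | p.1 + p.2 ∈ Ioc x (x + 1) ∧ p.2 ≤ c} :=
    (measurableSet_add_mem measurableSet_Ioc).inter (measurable_snd measurableSet_Iic)
  have hR := measurableSet_add_mem (s := Ioi x) measurableSet_Ioi
  rw [mconv_apply measurableSet_Ioi, Measure.prod_apply_symm hS, Measure.prod_apply_symm hR,
    ← lintegral_const_mul _ (measurable_measure_prodMk_right hR)]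
  refine lintegral_mono fun v => ?_
  by_cases hv : v ≤ c
  · calc μ ((fun u => (u, v)) ⁻¹' _) ≤ μ (Ioc (x - v) (x - v + 1)) :=
          measure_mono fun u hu => ⟨by linarith [hu.1.1], by linarith [hu.1.2]⟩
      _ ≤ δ * μ (Ioi (x - v)) := hμ _ (by linarith)
      _ ≤ δ * μ ((fun u => (u, v)) ⁻¹' _) := by
          gcongr
          exact fun u hu => show x < u + v by linarith [mem_Ioi.1 hu]
  · rw [measure_mono_null (fun u hu => hv hu.2) measure_empty]
    exact zero_le

lemma mconv_Ioc_le_two_mul_mconv_Ioi (hμ : ∀ t ≥ T, μ (Ioc t (t + 1)) ≤ δ * μ (Ioi t))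
    (hν : ∀ t ≥ T, ν (Ioc t (t + 1)) ≤ δ * ν (Ioi t)) (hx : 2 * T + 1 ≤ x) :
    mconv μ ν (Ioc x (x + 1)) ≤ 2 * δ * mconv μ ν (Ioi x) := by
  have hsplit : {p : ℝ × ℝ | p.1 + p.2 ∈ Ioc x (x + 1)} ⊆
      {p | p.1 + p.2 ∈ Ioc x (x + 1) ∧ p.1 ≤ x - T} ∪
        {p | p.1 + p.2 ∈ Ioc x (x + 1) ∧ p.2 ≤ T + 1} := fun p hp => by
    by_cases h : p.1 ≤ x - T
    · exact Or.inl ⟨hp, h⟩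
    · exact Or.inr ⟨hp, by linarith [hp.2]⟩
  calc mconv μ ν (Ioc x (x + 1))
      ≤ μ.prod ν {p | p.1 + p.2 ∈ Ioc x (x + 1) ∧ p.1 ≤ x - T} +
          μ.prod ν {p | p.1 + p.2 ∈ Ioc x (x + 1) ∧ p.2 ≤ T + 1} := by
        rw [mconv_apply measurableSet_Ioc]
        exact (measure_mono hsplit).trans (measure_union_le _ _)
    _ ≤ δ * mconv μ ν (Ioi x) + δ * mconv μ ν (Ioi x) :=
        add_le_add (prod_add_mem_Ioc_fst_le hν (by linarith))
          (prod_add_mem_Ioc_snd_le hμ (by linarith))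
    _ = 2 * δ * mconv μ ν (Ioi x) := by rw [two_mul, add_mul]

end Convolution

theorem longTailed_mconv {μ ν : Measure ℝ} [IsFiniteMeasure μ] [IsFiniteMeasure ν]
    (hμ : LongTailed μ) (hν : LongTailed ν) : LongTailed (mconv μ ν) := by
  have hpos : ∀ x, 0 < tail (mconv μ ν) x := fun x => by
    simpa using (mul_pos (hμ.tail_pos x) (hν.tail_pos 0)).trans_le
      (tail_mul_tail_le_tail_mconv x 0)
  rw [longTailed_iff_eventually_intv_le hμ.tail_pos] at hμ
  rw [longTailed_iff_eventually_intv_le hν.tail_pos] at hν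
  rw [longTailed_iff_eventually_intv_le hpos]
  intro ε hε
  have hε2 : 0 ≤ ε / 2 := by positivity
  obtain ⟨T, hT⟩ :=
    eventually_atTop.1 ((hμ (ε / 2) (half_pos hε)).and (hν (ε / 2) (half_pos hε)))
  filter_upwards [eventually_ge_atTop (2 * T + 1)] with x hx
  rw [intv_le_mul_tail_iff hε.le]
  calc mconv μ ν (Ioc x (x + 1))
      ≤ 2 * ENNReal.ofReal (ε / 2) * mconv μ ν (Ioi x) :=
        mconv_Ioc_le_two_mul_mconv_Ioi (fun t ht => (intv_le_mul_tail_iff hε2 _ _ _).1 (hT t ht).1)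
          (fun t ht => (intv_le_mul_tail_iff hε2 _ _ _).1 (hT t ht).2) hx
    _ = ENNReal.ofReal ε * mconv μ ν (Ioi x) := by
        rw [← ENNReal.ofReal_ofNat 2, ← ENNReal.ofReal_mul zero_le_two,
          mul_div_cancel₀ _ two_ne_zero]

lemma exists_measure_Ioc_half_ne_zero {μ : Measure ℝ} (h : μ (Ioi 0) ≠ 0) :
    ∃ a ≥ 0, μ (Ioc a (a + 1 / 2)) ≠ 0 := by
  have hcover : (⋃ n : ℕ, Ioc ((n : ℝ) / 2) (n / 2 + 1 / 2)) = Ioi 0 := by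
    simpa [add_div] using iUnion_Ioc_map_succ_eq_Ioi (f := fun n : ℕ => (n : ℝ) / 2)
      (fun n => by simp only [bot_eq_zero', CharP.cast_eq_zero, zero_div]; positivity)
      (not_bddAbove_of_tendsto_atTop (tendsto_natCast_atTop_atTop.atTop_div_const two_pos))
  by_contra! h'
  exact h (hcover ▸ measure_iUnion_null fun n => h' _ (by positivity))

lemma pos_and_tail_pos_of_tail_mconv_self_le {μ : Measure ℝ} [IsFiniteMeasure μ] {M : ℝ}
    (hM : ∀ᶠ x in atTop, tail (mconv μ μ) x ≤ M * tail μ x)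
    (hpos : ∀ x, 0 < tail (mconv μ μ) x) : 0 < M ∧ ∀ x, 0 < tail μ x := by
  have hMtail : ∀ᶠ x in atTop, 0 < M * tail μ x := hM.mono fun x hx => (hpos x).trans_le hx
  obtain ⟨x₀, hx₀⟩ := hMtail.exists
  have hMpos : 0 < M := pos_of_mul_pos_left hx₀ (tail_nonneg _ _)
  exact ⟨hMpos, tail_pos_of_eventually_pos
    (hMtail.mono fun x hx => pos_of_mul_pos_right hx hMpos.le)⟩

theorem LongTailed.of_mconv_self {μ : Measure ℝ} [IsFiniteMeasure μ]
    (hOS : ∃ M, ∀ᶠ x in atTop, tail (mconv μ μ) x ≤ M * tail μ x)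
    (h : LongTailed (mconv μ μ)) : LongTailed μ := by
  obtain ⟨M, hM⟩ := hOS
  have hGpos := h.tail_pos
  obtain ⟨hMpos, hpos⟩ := pos_and_tail_pos_of_tail_mconv_self_le hM hGpos
  obtain ⟨a, ha, hpa⟩ :=
    exists_measure_Ioc_half_ne_zero (ENNReal.toReal_pos_iff.1 (hpos 0)).1.ne'
  set p := intv μ a (a + 1 / 2)
  have hp : 0 < p := ENNReal.toReal_pos hpa (measure_ne_top _ _)
  rw [longTailed_iff_eventually_intv_le hGpos] at h
  rw [longTailed_iff_eventually_intv_le hpos]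
  intro ε hε
  set δ := ε * p / (2 * M)
  obtain ⟨T, hT⟩ := eventually_atTop.1 ((h δ (by positivity)).and hM)
  filter_upwards [eventually_ge_atTop T] with x hx
  have hterm (b : ℝ) (hb : 0 ≤ b) :
      intv (mconv μ μ) (b + x) (b + x + 1) ≤ δ * (M * tail μ x) := by
    obtain ⟨hΔ, hbound⟩ := hT (b + x) (by linarith)
    calc intv (mconv μ μ) (b + x) (b + x + 1) ≤ δ * tail (mconv μ μ) (b + x) := hΔ
      _ ≤ δ * (M * tail μ x) := by
        gcongr
        exact hbound.trans (mul_le_mul_of_nonneg_left (tail_antitone (by linarith)) hMpos.le)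
  refine le_of_mul_le_mul_left ?_ hp
  calc p * intv μ x (x + 1)
      ≤ δ * (M * tail μ x) + δ * (M * tail μ x) :=
        (intv_half_mul_intv_le_intv_mconv_add a x).trans
          (add_le_add (hterm a ha) (hterm (a + 1 / 2) (by positivity)))
    _ = p * (ε * tail μ x) := by
        simp only [δ]
        field_simp
        ring

/-- If F belongs to the class OS, then F is long-tailed iff F*F is long-tailed. -/
theorem stmt12 (F : Measure ℝ) [IsProbabilityMeasure F] (hOS : OSClass F) :
    LongTailed F ↔ LongTailed (mconv F F) :=
  ⟨fun h => longTailed_mconv h h, LongTailed.of_mconv_self hOS.2⟩
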